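/- For b ≥ 1, let T_1 act on Q(q)[y_1,y_2] by T_1 = Δ*_{y_1,y_2}, i.e. (T_1 P)(y_1,y_2) = ((q-1)y_1 P(y_1,y_2) + (y_2-q y_1)P(y_2,y_1))/(y_2-y_1). Then (T_1 + q)((1-q)·t^b·y_1^b) = (1-q)·t^b·(y_1^b + (1-q)·∑_{a=1}^{b-1} y_1^a·y_2^{b-a} + y_2^b), i.e. (T_1+q)·h_b[t(1-q)y_1] = h_b[t(1-q)(y_1+y_2)]. -/

import Mathlib

/-!
Multiplying by `y₂ - y₁`, which is not a zero divisor, turns the claim into a polynomial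
identity; after substituting the defining relation of `T₁`, the only non-trivial ingredient is
the telescoping sum `(y₂ - y₁) ∑_{a=1}^{b-1} y₁^a y₂^{b-a} = y₁ y₂^b - y₁^b y₂`.
-/

noncomputable section
open MvPolynomial

abbrev F : Type := RatFunc (RatFunc ℚ)

noncomputable def q : F := RatFunc.C RatFunc.X

noncomputable def t : F := RatFunc.X

theorem sub_mul_sum_Ico_pow_mul_pow {R : Type*} [CommRing R] (x y : R) {b : ℕ} (hb : 1 ≤ b) :
    (y - x) * ∑ a ∈ Finset.Ico 1 b, x ^ a * y ^ (b - a) = x * y ^ b - x ^ b * y := by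
  set g : ℕ → R := fun a => x ^ a * y ^ (b + 1 - a)
  have hterm : ∀ a ∈ Finset.Ico 1 b, (y - x) * (x ^ a * y ^ (b - a)) = -(g (a + 1) - g a) := by
    intro a ha
    obtain ⟨k, rfl⟩ := Nat.exists_eq_add_of_le (Finset.mem_Ico.mp ha).2.le
    simp only [g, show a + k + 1 - a = k + 1 by omega, show a + k + 1 - (a + 1) = k by omega,
      Nat.add_sub_cancel_left]
    ring
  rw [Finset.mul_sum, Finset.sum_congr rfl hterm, Finset.sum_neg_distrib, Finset.sum_Ico_sub g hb]
  simp only [g, Nat.add_sub_cancel, show b + 1 - b = 1 by omega]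
  ring

theorem T1_plus_q_on_hb
    (T : MvPolynomial (Fin 2) F → MvPolynomial (Fin 2) F)
    (hT : ∀ P : MvPolynomial (Fin 2) F,
      (X 1 - X 0) * T P =
        C (q - 1) * X 0 * P + (X 1 - C q * X 0) * rename (Equiv.swap (0 : Fin 2) 1) P) :
    ∀ b : ℕ, 1 ≤ b →
      T (C ((1 - q) * t ^ b) * X 0 ^ b) + C q * (C ((1 - q) * t ^ b) * X 0 ^ b) =
        C ((1 - q) * t ^ b) *
          (X 0 ^ b + C (1 - q) * ∑ a ∈ Finset.Ico 1 b, X 0 ^ a * X 1 ^ (b - a) + X 1 ^ b) := by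
  intro b hb
  have hne : (X 1 - X 0 : MvPolynomial (Fin 2) F) ≠ 0 :=
    sub_ne_zero.mpr ((X_injective (R := F)).ne (by decide))
  have hswap : rename (Equiv.swap (0 : Fin 2) 1) (C ((1 - q) * t ^ b) * X 0 ^ b) =
      C ((1 - q) * t ^ b) * X 1 ^ b := by
    simp
  apply mul_left_cancel₀ hne
  rw [mul_add, hT, hswap]
  simp only [map_sub, map_one]
  linear_combination (-(C ((1 - q) * t ^ b) * (1 - C q))) *
    sub_mul_sum_Ico_pow_mul_pow (X 0 : MvPolynomial (Fin 2) F) (X 1) hb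

end
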